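/- arXiv:cs/0606083 — 2 statements merged into one kernel-verified Lean document; each statement's English description precedes it below -/
import Mathlib

section
/- Let 𝒳 = {X ∈ 𝕊^{m+1} : diag(X) = e, X ⪰ 0} and M = [I, -e] ∈ ℝ^{m×(m+1)}. Then the image M 𝒳 Mᵀ equals {Y ∈ 𝕊^m : Y ⪰ (1/4) d dᵀ where d = diag(Y)} (without the trace constraint; with the additional constraint Tr(M X Mᵀ)=1 on 𝒳 it equals {Y ∈ 𝕊^m : Tr(Y)=1, Y ⪰ (1/4) diag(Y) diag(Y)ᵀ}). -/
/-!
Write `X = [[A, x], [xᵀ, 1]]`. Then `M X Mᵀ = A - x eᵀ - e xᵀ + e eᵀ`, whose diagonal is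
`d = 2 (e - x)` once `diag X = e`; so `x = e - d / 2`, and then `A`, are recovered from
`Y = M X Mᵀ`, and `Y - ¼ d dᵀ = A - x xᵀ` is the Schur complement of the corner `1` of `X`.
Hence `X ↦ M X Mᵀ` is a bijection from symmetric matrices with unit diagonal onto symmetric
matrices (inverse `unitDiagLift`), and `X ⪰ 0` corresponds to `Y ⪰ ¼ d dᵀ`. The trace
constraint is then the same condition on both sides.
-/

open Matrix

variable {n : Type*}

def diffLast (n : Type*) [DecidableEq n] : Matrix n (n ⊕ Fin 1) ℝ :=
  fromCols 1 (-replicateCol (Fin 1) fun _ => 1)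

lemma diffLast_mul_mul_transpose_apply [Fintype n] [DecidableEq n]
    (X : Matrix (n ⊕ Fin 1) (n ⊕ Fin 1) ℝ) (i j : n) :
    (diffLast n * X * (diffLast n)ᵀ) i j =
      X (.inl i) (.inl j) - X (.inl i) (.inr 0) - X (.inr 0) (.inl j) + X (.inr 0) (.inr 0) := by
  simp [diffLast, mul_apply, Fintype.sum_sum_type, one_apply]
  ring

lemma transpose_mul_mul_transpose {m α : Type*} [Fintype m] [CommSemiring α]
    {X : Matrix m m α} (hX : Xᵀ = X) (M : Matrix n m α) : (M * X * Mᵀ)ᵀ = M * X * Mᵀ := by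
  rw [transpose_mul, transpose_mul, transpose_transpose, hX, Matrix.mul_assoc]

lemma posSemidef_fromBlocks_one_iff [Fintype n] (A : Matrix n n ℝ) (x : n → ℝ) :
    (fromBlocks A (replicateCol (Fin 1) x) (replicateRow (Fin 1) x) 1).PosSemidef ↔
      (A - vecMulVec x x).PosSemidef := by
  let : Invertible (1 : Matrix (Fin 1) (Fin 1) ℝ) := invertibleOne
  have h := PosDef.fromBlocks₂₂ A (replicateCol (Fin 1) x) (PosDef.one (n := Fin 1) (R := ℝ))
  rw [conjTranspose_replicateCol, star_trivial, inv_one, Matrix.mul_one] at h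
  rwa [vecMulVec_eq (Fin 1)]

noncomputable def unitDiagLift (Y : Matrix n n ℝ) : Matrix (n ⊕ Fin 1) (n ⊕ Fin 1) ℝ :=
  let x : n → ℝ := fun i => 1 - Y i i / 2
  fromBlocks (Y - (1 / 4 : ℝ) • vecMulVec Y.diag Y.diag + vecMulVec x x)
    (replicateCol (Fin 1) x) (replicateRow (Fin 1) x) 1

lemma transpose_unitDiagLift {Y : Matrix n n ℝ} (hY : Yᵀ = Y) :
    (unitDiagLift Y)ᵀ = unitDiagLift Y := by
  rw [unitDiagLift, fromBlocks_transpose]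
  simp [transpose_add, transpose_sub, transpose_smul, transpose_vecMulVec, hY]

lemma unitDiagLift_apply_self (Y : Matrix n n ℝ) (i : n ⊕ Fin 1) : unitDiagLift Y i i = 1 := by
  rcases i with i | i
  · simp [unitDiagLift, vecMulVec_apply]
    ring
  · simp [unitDiagLift, Subsingleton.elim i 0]

lemma posSemidef_unitDiagLift_iff [Fintype n] (Y : Matrix n n ℝ) :
    (unitDiagLift Y).PosSemidef ↔ (Y - (1 / 4 : ℝ) • vecMulVec Y.diag Y.diag).PosSemidef := by
  rw [unitDiagLift, posSemidef_fromBlocks_one_iff, add_sub_cancel_right]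

variable [Fintype n] [DecidableEq n]

lemma diffLast_mul_unitDiagLift_mul_transpose (Y : Matrix n n ℝ) :
    diffLast n * unitDiagLift Y * (diffLast n)ᵀ = Y := by
  ext i j
  simp [diffLast_mul_mul_transpose_apply, unitDiagLift, vecMulVec_apply]
  ring

lemma unitDiagLift_diffLast_mul_mul_transpose {X : Matrix (n ⊕ Fin 1) (n ⊕ Fin 1) ℝ}
    (hX : Xᵀ = X) (hdiag : ∀ i, X i i = 1) :
    unitDiagLift (diffLast n * X * (diffLast n)ᵀ) = X := by
  have hsymm (a b) : X b a = X a b := by rw [← transpose_apply X, hX]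
  ext (i | i) (j | j)
  · simp [unitDiagLift, vecMulVec_apply, diffLast_mul_mul_transpose_apply, hdiag, hsymm (.inr 0)]
    ring
  · simp [unitDiagLift, diffLast_mul_mul_transpose_apply, hdiag, hsymm (.inr 0),
      Subsingleton.elim j 0]
    ring
  · simp [unitDiagLift, diffLast_mul_mul_transpose_apply, hdiag, hsymm (.inr 0),
      Subsingleton.elim i 0]
    ring
  · simp [unitDiagLift, hdiag, Subsingleton.elim i j, Subsingleton.elim j 0]

theorem image_diffLast_conj_elliptope :
    (fun X => diffLast n * X * (diffLast n)ᵀ) ''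
        {X : Matrix (n ⊕ Fin 1) (n ⊕ Fin 1) ℝ | Xᵀ = X ∧ (∀ i, X i i = 1) ∧ X.PosSemidef} =
      {Y : Matrix n n ℝ | Yᵀ = Y ∧ (Y - (1 / 4 : ℝ) • vecMulVec Y.diag Y.diag).PosSemidef} := by
  ext Y
  constructor
  · rintro ⟨X, ⟨hXT, hdiag, hX⟩, rfl⟩
    rw [← unitDiagLift_diffLast_mul_mul_transpose hXT hdiag, posSemidef_unitDiagLift_iff] at hX
    exact ⟨transpose_mul_mul_transpose hXT _, hX⟩
  · rintro ⟨hYT, hY⟩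
    exact ⟨unitDiagLift Y, ⟨transpose_unitDiagLift hYT, unitDiagLift_apply_self Y,
      (posSemidef_unitDiagLift_iff Y).2 hY⟩, diffLast_mul_unitDiagLift_mul_transpose Y⟩

/-- with `𝒳 = {X ∈ 𝕊^{m+1} : diag(X) = e, X ⪰ 0}` and `M = [I, -e]`,
the image `M 𝒳 Mᵀ` equals `{Y ∈ 𝕊^m : Y ⪰ (1/4) d dᵀ, d = diag Y}`; adding the
constraint `Tr(M X Mᵀ) = 1` the image equals
`{Y ∈ 𝕊^m : Tr Y = 1, Y ⪰ (1/4) diag(Y) diag(Y)ᵀ}`. -/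
theorem stmt3 (m : ℕ) (M : Matrix (Fin m) (Fin m ⊕ Fin 1) ℝ)
    (hM : M = fromCols 1 (-(replicateCol (Fin 1) (fun _ => 1))))
    (𝒳 : Set (Matrix (Fin m ⊕ Fin 1) (Fin m ⊕ Fin 1) ℝ))
    (h𝒳 : 𝒳 = {X | Xᵀ = X ∧ (∀ i, X i i = 1) ∧ X.PosSemidef}) :
    ((fun X => M * X * Mᵀ) '' 𝒳 =
      {Y | Yᵀ = Y ∧ (Y - (1 / 4 : ℝ) • vecMulVec Y.diag Y.diag).PosSemidef}) ∧
    ((fun X => M * X * Mᵀ) '' {X ∈ 𝒳 | Matrix.trace (M * X * Mᵀ) = 1} =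
      {Y | Yᵀ = Y ∧ Matrix.trace Y = 1 ∧
        (Y - (1 / 4 : ℝ) • vecMulVec Y.diag Y.diag).PosSemidef}) := by
  have himage : (fun X => M * X * Mᵀ) '' 𝒳 =
      {Y | Yᵀ = Y ∧ (Y - (1 / 4 : ℝ) • vecMulVec Y.diag Y.diag).PosSemidef} := by
    subst hM h𝒳
    exact image_diffLast_conj_elliptope
  refine ⟨himage, ?_⟩
  change (fun X => M * X * Mᵀ) '' (𝒳 ∩ (fun X => M * X * Mᵀ) ⁻¹' {Y | Y.trace = 1}) = _
  rw [Set.image_inter_preimage, himage]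
  ext Y
  simp only [Set.mem_inter_iff, Set.mem_ofPred_eq]
  tauto
end

section
/- Let h ∈ ℝ^d be a random vector with i.i.d. standard Gaussian entries and let c ∈ ℝ. Then lim_{ρ→∞} ln P(‖h‖² ≤ ρ^{-c}) / ln ρ = -d·max(c,0)/2. -/
open Filter MeasureTheory ProbabilityTheory Real
open scoped NNReal ENNReal


lemma pdf_eq (x : ℝ) : gaussianPDFReal 0 1 x = (√(2*π))⁻¹ * rexp (-x^2/2) := by
  simp [gaussianPDFReal]

lemma sqrt2pi_ge : (2:ℝ) ≤ √(2 * π) := by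
  rw [Real.le_sqrt' (by norm_num)]
  nlinarith [Real.pi_gt_three]

lemma sqrt2pi_le : √(2 * π) ≤ 3 := by
  rw [Real.sqrt_le_iff]
  constructor
  · norm_num
  · nlinarith [Real.pi_lt_d2]


lemma pdf_upper (x : ℝ) : gaussianPDFReal 0 1 x ≤ 1/2 := by
  rw [pdf_eq]
  have h2 : (√(2 * π))⁻¹ ≤ 1/2 := by
    rw [inv_le_comm₀ (by linarith [sqrt2pi_ge]) (by norm_num)]
    simpa using sqrt2pi_ge
  have h3 : rexp (-x^2/2) ≤ 1 := by
    rw [show (1:ℝ) = rexp 0 from (Real.exp_zero).symm]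
    apply Real.exp_le_exp.2
    nlinarith [sq_nonneg x]
  calc (√(2 * π))⁻¹ * rexp (-x^2/2) ≤ (1/2) * 1 :=
        mul_le_mul h2 h3 (Real.exp_nonneg _) (by norm_num)
    _ = 1/2 := by norm_num

lemma pdf_lower (x : ℝ) (hx : |x| ≤ 1) : 1/6 ≤ gaussianPDFReal 0 1 x := by
  rw [pdf_eq]
  have hpos : (0:ℝ) < √(2 * π) := by positivity
  have h2 : (1:ℝ)/3 ≤ (√(2 * π))⁻¹ := by
    rw [le_inv_comm₀ (by norm_num) hpos]
    simpa using sqrt2pi_le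
  have h3 : (1:ℝ)/2 ≤ rexp (-x^2/2) := by
    have hx2 : x^2 ≤ 1 := by nlinarith [sq_abs x, abs_nonneg x]
    have he : rexp (-(1:ℝ)/2) ≤ rexp (-x^2/2) := by
      apply Real.exp_le_exp.2; nlinarith
    refine le_trans ?_ he
    have h4 : rexp ((1:ℝ)/2) ≤ 2 := by
      have h5 : rexp ((1:ℝ)/2) ^ 2 = rexp 1 := by
        rw [← Real.exp_nat_mul]; norm_num
      nlinarith [Real.exp_one_lt_d9, Real.exp_pos ((1:ℝ)/2)]
    rw [show (-(1:ℝ)/2) = -(1/2) by ring, Real.exp_neg]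
    rw [le_inv_comm₀ (by norm_num) (Real.exp_pos _)]
    simpa using h4
  calc (1:ℝ)/6 = (1/3) * (1/2) := by norm_num
    _ ≤ (√(2*π))⁻¹ * rexp (-x^2/2) :=
        mul_le_mul h2 h3 (by norm_num) (le_of_lt (by positivity))


lemma gauss_Icc_upper (r : ℝ) (hr : 0 ≤ r) :
    gaussianReal 0 1 (Set.Icc (-r) r) ≤ ENNReal.ofReal r := by
  rw [gaussianReal_apply 0 one_ne_zero]
  calc ∫⁻ x in Set.Icc (-r) r, gaussianPDF 0 1 x
      ≤ ∫⁻ _ in Set.Icc (-r) r, ENNReal.ofReal (1/2) := by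
        apply lintegral_mono
        intro x
        exact ENNReal.ofReal_le_ofReal (pdf_upper x)
    _ = ENNReal.ofReal (1/2) * volume (Set.Icc (-r) r) := by
        rw [setLIntegral_const]
    _ = ENNReal.ofReal r := by
        rw [Real.volume_Icc, ← ENNReal.ofReal_mul (by norm_num)]
        congr 1
        ring

lemma gauss_Icc_lower (r : ℝ) (hr : 0 ≤ r) (hr1 : r ≤ 1) :
    ENNReal.ofReal (r/3) ≤ gaussianReal 0 1 (Set.Icc (-r) r) := by
  rw [gaussianReal_apply 0 one_ne_zero]
  calc ENNReal.ofReal (r/3)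
      = ENNReal.ofReal (1/6) * volume (Set.Icc (-r) r) := by
        rw [Real.volume_Icc, ← ENNReal.ofReal_mul (by norm_num)]
        congr 1
        ring
    _ = ∫⁻ _ in Set.Icc (-r) r, ENNReal.ofReal (1/6) := by
        rw [setLIntegral_const]
    _ ≤ ∫⁻ x in Set.Icc (-r) r, gaussianPDF 0 1 x := by
        apply setLIntegral_mono (measurable_gaussianPDF 0 1)
        intro x hx
        apply ENNReal.ofReal_le_ofReal
        apply pdf_lower
        rw [abs_le]
        exact ⟨le_trans (by linarith) hx.1, le_trans hx.2 hr1⟩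


lemma F_upper (d : ℕ) (t : ℝ) (ht : 0 ≤ t) :
    (Measure.pi fun _ : Fin d => gaussianReal 0 1) {h | ∑ i, h i ^ 2 ≤ t}
      ≤ ENNReal.ofReal ((√t)^d) := by
  have hsub : {h : Fin d → ℝ | ∑ i, h i ^ 2 ≤ t}
      ⊆ Set.pi Set.univ (fun _ => Set.Icc (-√t) (√t)) := by
    intro h hh i _
    have h1 : h i ^ 2 ≤ t :=
      le_trans (Finset.single_le_sum (fun j _ => sq_nonneg (h j)) (Finset.mem_univ i)) hh
    have := Real.abs_le_sqrt h1
    rw [abs_le] at this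
    exact ⟨this.1, this.2⟩
  calc (Measure.pi fun _ : Fin d => gaussianReal 0 1) {h | ∑ i, h i ^ 2 ≤ t}
      ≤ (Measure.pi fun _ : Fin d => gaussianReal 0 1)
          (Set.pi Set.univ (fun _ => Set.Icc (-√t) (√t))) := measure_mono hsub
    _ = ∏ _i : Fin d, gaussianReal 0 1 (Set.Icc (-√t) (√t)) := Measure.pi_pi _ _
    _ ≤ ∏ _i : Fin d, ENNReal.ofReal (√t) :=
        Finset.prod_le_prod' (fun i _ => gauss_Icc_upper _ (Real.sqrt_nonneg t))
    _ = ENNReal.ofReal ((√t)^d) := by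
        rw [Finset.prod_const, Finset.card_univ, Fintype.card_fin,
          ENNReal.ofReal_pow (Real.sqrt_nonneg t)]

lemma F_lower (d : ℕ) (hd : 0 < d) (t : ℝ) (ht : 0 ≤ t) (ht1 : t ≤ 1) :
    ENNReal.ofReal ((√(t/d)/3)^d)
      ≤ (Measure.pi fun _ : Fin d => gaussianReal 0 1) {h | ∑ i, h i ^ 2 ≤ t} := by
  set r : ℝ := √(t/d) with hr_def
  have hdpos : (0:ℝ) < d := Nat.cast_pos.mpr hd
  have hrnn : 0 ≤ r := Real.sqrt_nonneg _
  have hr1 : r ≤ 1 := by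
    rw [hr_def]
    rw [show (1:ℝ) = √1 from Real.sqrt_one.symm]
    apply Real.sqrt_le_sqrt
    rw [div_le_one hdpos]
    exact le_trans ht1 (by exact_mod_cast hd)
  have hsub : Set.pi Set.univ (fun _ : Fin d => Set.Icc (-r) r)
      ⊆ {h : Fin d → ℝ | ∑ i, h i ^ 2 ≤ t} := by
    intro h hh
    have hb : ∀ i : Fin d, h i ^ 2 ≤ t / d := by
      intro i
      have hi := hh i (Set.mem_univ i)
      have : h i ^ 2 ≤ r ^ 2 := sq_le_sq' hi.1 hi.2
      rwa [hr_def, Real.sq_sqrt (by positivity)] at this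
    calc ∑ i, h i ^ 2 ≤ ∑ _i : Fin d, t / d := Finset.sum_le_sum (fun i _ => hb i)
      _ = d * (t / d) := by rw [Finset.sum_const, Finset.card_univ, Fintype.card_fin]; ring
      _ = t := by field_simp
  calc ENNReal.ofReal ((r/3)^d)
      = ∏ _i : Fin d, ENNReal.ofReal (r/3) := by
        rw [Finset.prod_const, Finset.card_univ, Fintype.card_fin,
          ENNReal.ofReal_pow (by positivity)]
    _ ≤ ∏ _i : Fin d, gaussianReal 0 1 (Set.Icc (-r) r) :=
        Finset.prod_le_prod' (fun i _ => gauss_Icc_lower _ hrnn hr1)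
    _ = (Measure.pi fun _ : Fin d => gaussianReal 0 1)
          (Set.pi Set.univ (fun _ => Set.Icc (-r) r)) := (Measure.pi_pi _ _).symm
    _ ≤ _ := measure_mono hsub


/-- for `h ∈ ℝ^d` with i.i.d. standard Gaussian entries and `c ∈ ℝ`,
`lim_{ρ→∞} ln P(‖h‖² ≤ ρ^{-c}) / ln ρ = -d·max(c,0)/2`. -/
theorem stmt9 (d : ℕ) (hd : 0 < d) (c : ℝ)
    (μ : Measure (Fin d → ℝ))
    (hμ : μ = Measure.pi fun _ => gaussianReal 0 1) :
    Tendsto (fun ρ : ℝ =>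
        Real.log ((μ {h | ∑ i, h i ^ 2 ≤ ρ ^ (-c)}).toReal) / Real.log ρ)
      atTop (nhds (-(d * max c 0) / 2)) := by
  subst hμ
  set μ := (Measure.pi fun _ : Fin d => gaussianReal 0 1) with hμdef
  have hprob : IsProbabilityMeasure μ := by infer_instance
  set G : ℝ → ℝ := fun t => (μ {h | ∑ i, h i ^ 2 ≤ t}).toReal with hGdef
  have hdpos : (0:ℝ) < d := Nat.cast_pos.mpr hd
  set b : ℝ := (√((1:ℝ)/d)/3)^d with hbdef
  have hbpos : 0 < b := by
    apply pow_pos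
    have : (0:ℝ) < √((1:ℝ)/d) := Real.sqrt_pos.mpr (by positivity)
    positivity
  -- real-valued bounds
  have hGle : ∀ t : ℝ, 0 ≤ t → G t ≤ (√t)^d := by
    intro t ht
    exact ENNReal.toReal_le_of_le_ofReal (by positivity) (F_upper d t ht)
  have hGge : ∀ t : ℝ, 0 ≤ t → t ≤ 1 → b * (√t)^d ≤ G t := by
    intro t ht ht1
    have key := F_lower d hd t ht ht1
    have heq : (√(t/d)/3)^d = b * (√t)^d := by
      rw [show t/(d:ℝ) = t * (1/d) by ring, Real.sqrt_mul ht, mul_div_assoc, mul_pow, hbdef]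
      ring
    rw [heq] at key
    exact (ENNReal.ofReal_le_iff_le_toReal (measure_ne_top _ _)).mp key
  have hGmono : ∀ s t : ℝ, s ≤ t → G s ≤ G t := by
    intro s t hst
    exact ENNReal.toReal_mono (measure_ne_top _ _)
      (measure_mono (fun h hh => le_trans hh hst))
  have hGone : ∀ t : ℝ, G t ≤ 1 := by
    intro t
    exact ENNReal.toReal_le_of_le_ofReal zero_le_one (by simpa using prob_le_one)
  -- the tendency of log b / log ρ to 0
  have hlog0 : Tendsto (fun ρ : ℝ => Real.log b / Real.log ρ) atTop (nhds 0) := by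
    have h1 : Tendsto (fun ρ : ℝ => (Real.log ρ)⁻¹) atTop (nhds 0) :=
      Real.tendsto_log_atTop.inv_tendsto_atTop
    have h2 := h1.const_mul (Real.log b)
    simpa [div_eq_mul_inv] using h2
  clear_value b
  rcases le_or_gt c 0 with hc | hc
  · -- c ≤ 0 : limit is 0
    have htarget : -(↑d * max c 0) / 2 = (0:ℝ) := by
      rw [max_eq_right hc]; ring
    rw [htarget]
    apply tendsto_of_tendsto_of_tendsto_of_le_of_le' hlog0 tendsto_const_nhds
    · filter_upwards [eventually_gt_atTop (1:ℝ)] with ρ hρ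
      have hlρ : 0 < Real.log ρ := Real.log_pos hρ
      have ht1 : (1:ℝ) ≤ ρ ^ (-c) := Real.one_le_rpow hρ.le (neg_nonneg.mpr hc)
      have hb1 : b ≤ G (ρ ^ (-c)) := by
        have h1 : b * (√(1:ℝ))^d ≤ G 1 := hGge 1 zero_le_one le_rfl
        simpa using le_trans h1 (hGmono 1 _ ht1)
      have : Real.log b ≤ Real.log (G (ρ ^ (-c))) := Real.log_le_log hbpos hb1
      exact div_le_div_of_nonneg_right this hlρ.le
    · filter_upwards [eventually_gt_atTop (1:ℝ)] with ρ hρ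
      have hlρ : 0 < Real.log ρ := Real.log_pos hρ
      have : Real.log (G (ρ ^ (-c))) ≤ 0 :=
        Real.log_nonpos (ENNReal.toReal_nonneg) (hGone _)
      exact div_nonpos_of_nonpos_of_nonneg this hlρ.le
  · -- c > 0
    rw [max_eq_left hc.le]
    have hlo : Tendsto (fun ρ : ℝ => Real.log b / Real.log ρ + (-(↑d * c) / 2))
        atTop (nhds (-(↑d * c) / 2)) := by
      have := hlog0.add_const (-(↑d * c) / 2)
      simpa using this
    apply tendsto_of_tendsto_of_tendsto_of_le_of_le' hlo
      (tendsto_const_nhds (x := (-(↑d * c) / 2)) (f := atTop))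
    · filter_upwards [eventually_gt_atTop (1:ℝ)] with ρ hρ
      have hρ0 : (0:ℝ) < ρ := by linarith
      have hlρ : 0 < Real.log ρ := Real.log_pos hρ
      set t : ℝ := ρ ^ (-c) with htdef
      have htpos : 0 < t := Real.rpow_pos_of_pos hρ0 _
      have ht1 : t ≤ 1 := Real.rpow_le_one_of_one_le_of_nonpos hρ.le (by linarith)
      have hlogt : Real.log t = -c * Real.log ρ := Real.log_rpow hρ0 _
      have hGb : b * (√t)^d ≤ G t := hGge t htpos.le ht1
      have hsqpos : (0:ℝ) < (√t)^d := pow_pos (Real.sqrt_pos.mpr htpos) d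
      have hlow : Real.log b + ↑d * (Real.log t / 2) ≤ Real.log (G t) := by
        have h1 : Real.log (b * (√t)^d) ≤ Real.log (G t) :=
          Real.log_le_log (by positivity) hGb
        rwa [Real.log_mul hbpos.ne' hsqpos.ne', Real.log_pow,
          Real.log_sqrt htpos.le] at h1
      have e1 : (Real.log b + ↑d * (-c * Real.log ρ / 2)) / Real.log ρ
          = Real.log b / Real.log ρ + -(↑d * c) / 2 := by
        field_simp
      rw [← e1]
      rw [hlogt] at hlow
      exact div_le_div_of_nonneg_right hlow hlρ.le
    · filter_upwards [eventually_gt_atTop (1:ℝ)] with ρ hρ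
      have hρ0 : (0:ℝ) < ρ := by linarith
      have hlρ : 0 < Real.log ρ := Real.log_pos hρ
      set t : ℝ := ρ ^ (-c) with htdef
      have htpos : 0 < t := Real.rpow_pos_of_pos hρ0 _
      have ht1 : t ≤ 1 := Real.rpow_le_one_of_one_le_of_nonpos hρ.le (by linarith)
      have hlogt : Real.log t = -c * Real.log ρ := Real.log_rpow hρ0 _
      have hGb : b * (√t)^d ≤ G t := hGge t htpos.le ht1
      have hGpos : 0 < G t := lt_of_lt_of_le (by positivity) hGb
      have hup : Real.log (G t) ≤ ↑d * (Real.log t / 2) := by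
        have h1 : Real.log (G t) ≤ Real.log ((√t)^d) :=
          Real.log_le_log hGpos (hGle t htpos.le)
        rwa [Real.log_pow, Real.log_sqrt htpos.le] at h1
      have h2 : Real.log (G t) / Real.log ρ
          ≤ (↑d * (-c * Real.log ρ / 2)) / Real.log ρ := by
        rw [← hlogt]
        exact div_le_div_of_nonneg_right hup hlρ.le
      refine h2.trans_eq ?_
      field_simp
end
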